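/- arXiv:1303.0140 — 8 statements merged into one kernel-verified Lean document; each statement's English description precedes it below -/
import Mathlib

section
/- For λ, β ≥ 0, γ ≥ 0, and any x with x² ≤ γ², the function f(λ) = λβ/(λ+β) + x² satisfies f(λ) ≤ max{λ, (3γ² + √(γ⁴ + 4γ²β))/2}. -/
/-- For λ, β ≥ 0, γ ≥ 0, and any x with x² ≤ γ², the function
f(λ) = λβ/(λ+β) + x² satisfies f(λ) ≤ max{λ, (3γ² + √(γ⁴ + 4γ²β))/2}. -/
theorem stmt_1 (lam beta gamma x : ℝ) (hlam : 0 ≤ lam) (hbeta : 0 ≤ beta)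
    (hgamma : 0 ≤ gamma) (hx : x ^ 2 ≤ gamma ^ 2) :
    lam * beta / (lam + beta) + x ^ 2 ≤
      max lam ((3 * gamma ^ 2 + Real.sqrt (gamma ^ 4 + 4 * gamma ^ 2 * beta)) / 2) := by
  have hs0 : (0:ℝ) ≤ gamma ^ 4 + 4 * gamma ^ 2 * beta := by positivity
  set s := Real.sqrt (gamma ^ 4 + 4 * gamma ^ 2 * beta) with hs
  have hsnn : 0 ≤ s := Real.sqrt_nonneg _
  have hssq : s ^ 2 = gamma ^ 4 + 4 * gamma ^ 2 * beta := Real.sq_sqrt hs0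
  rcases eq_or_lt_of_le (by positivity : (0:ℝ) ≤ lam + beta) with h0 | hpos
  · have hl : lam = 0 := by linarith
    apply le_trans _ (le_max_right _ _)
    rw [← h0, div_zero]
    nlinarith
  · by_cases h : x ^ 2 * (lam + beta) ≤ lam ^ 2
    · apply le_trans _ (le_max_left _ _)
      have key : lam * beta / (lam + beta) = lam - lam ^ 2 / (lam + beta) := by
        field_simp; ring
      have h2 : x ^ 2 ≤ lam ^ 2 / (lam + beta) := (le_div_iff₀ hpos).2 h
      rw [key]; linarith
    · push_neg at h
      have hlam2 : lam ^ 2 < gamma ^ 2 * (lam + beta) := by nlinarith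
      have hlt : lam < (gamma ^ 2 + s) / 2 := by
        by_contra hc
        push_neg at hc
        nlinarith [hssq, hsnn]
      apply le_trans _ (le_max_right _ _)
      have hdiv : lam * beta / (lam + beta) ≤ lam := by
        rw [div_le_iff₀ hpos]; nlinarith
      linarith
end

section
/- Let b, c > 0 and define a sequence of d×d positive definite real matrices by D₁ = bI + x₁x₁ᵀ and D_t = (D_{t-1}⁻¹ + c⁻¹I)⁻¹ + x_t x_tᵀ, where each x_t ∈ ℝ^d satisfies ‖x_t‖² ≤ X². Then for all t ≥ 1, every eigenvalue of D_t is at most max{(3X² + √(X⁴ + 4X²c))/2, b + X²}. -/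
/-!
Write `M` for the right-hand side. In the Loewner order, `D ≤ M • 1` is preserved by the
recursion: inversion is antitone on positive definite matrices, so `D ≤ M • 1` gives
`D⁻¹ + c⁻¹ • 1 ≥ (M⁻¹ + c⁻¹) • 1` and hence `(D⁻¹ + c⁻¹ • 1)⁻¹ ≤ (M⁻¹ + c⁻¹)⁻¹ • 1`, while
`x xᵀ ≤ ‖x‖² • 1 ≤ X² • 1` by Cauchy–Schwarz. It remains that `(M⁻¹ + c⁻¹)⁻¹ + X² ≤ M`, which is
the quadratic inequality `X² (M + c) ≤ M²`, and `b + X² ≤ M` for the first step.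
-/

open Matrix
open scoped MatrixOrder ComplexOrder

lemma inv_add_inv_inv_add_le {M c q : ℝ} (hM : 0 < M) (hc : 0 < c) (hq : 0 ≤ q)
    (h : (q + √(q ^ 2 + 4 * q * c)) / 2 ≤ M) : (M⁻¹ + c⁻¹)⁻¹ + q ≤ M := by
  have hs := Real.sq_sqrt (show 0 ≤ q ^ 2 + 4 * q * c by positivity)
  have hquad : q * (M + c) ≤ M ^ 2 := by nlinarith [Real.sqrt_nonneg (q ^ 2 + 4 * q * c)]
  rw [inv_add_inv hM.ne' hc.ne', inv_div, div_add' _ _ _ (by positivity),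
    div_le_iff₀ (by positivity)]
  nlinarith

section Loewner

variable {A : Type*} [TopologicalSpace A] [Ring A] [StarRing A] [PartialOrder A]
  [StarOrderedRing A] [Algebra ℝ A] [ContinuousFunctionalCalculus ℝ A IsSelfAdjoint]
  [NonnegSpectrumClass ℝ A]

lemma IsStrictlyPositive.le_algebraMap_iff_algebraMap_inv_le_inverse {a : A}
    (ha : IsStrictlyPositive a) {r : ℝ} (hr : 0 < r) :
    a ≤ algebraMap ℝ A r ↔ algebraMap ℝ A r⁻¹ ≤ Ring.inverse a := by
  have hcont : ContinuousOn (fun x : ℝ ↦ x⁻¹) (spectrum ℝ a) :=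
    continuousOn_inv₀.mono fun x hx => (ha.spectrum_pos hx).ne'
  rw [le_algebraMap_iff_spectrum_le, ← cfc_ringInverse_id (R := ℝ) a ha.isUnit,
    algebraMap_le_cfc_iff _ _ _ hcont]
  exact forall₂_congr fun x hx => (inv_le_inv₀ hr (ha.spectrum_pos hx)).symm

end Loewner

namespace Matrix

variable {n : Type*} [Fintype n] [DecidableEq n]

section RCLike

variable {𝕜 : Type*} [RCLike 𝕜]

lemma PosDef.le_smul_one_iff_inv_smul_one_le_inv {A : Matrix n n 𝕜} (hA : A.PosDef) {r : ℝ}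
    (hr : 0 < r) : A ≤ r • 1 ↔ r⁻¹ • 1 ≤ A⁻¹ := by
  simpa only [Algebra.algebraMap_eq_smul_one, ← nonsing_inv_eq_ringInverse] using
    hA.isStrictlyPositive.le_algebraMap_iff_algebraMap_inv_le_inverse hr

lemma PosDef.inv_le_smul_one_iff {A : Matrix n n 𝕜} (hA : A.PosDef) {r : ℝ} (hr : 0 < r) :
    A⁻¹ ≤ r⁻¹ • 1 ↔ r • 1 ≤ A := by
  simpa only [inv_inv, nonsing_inv_nonsing_inv _ (A.isUnit_iff_isUnit_det.mp hA.isUnit)] using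
    hA.inv.le_smul_one_iff_inv_smul_one_le_inv (inv_pos.2 hr)

lemma PosDef.inv_add_smul_one_inv_le {D : Matrix n n 𝕜} (hD : D.PosDef) {M c : ℝ}
    (hM : 0 < M) (hc : 0 < c) (h : D ≤ M • 1) :
    (D⁻¹ + c⁻¹ • 1)⁻¹ ≤ (M⁻¹ + c⁻¹)⁻¹ • 1 := by
  have hE : (D⁻¹ + c⁻¹ • (1 : Matrix n n 𝕜)).PosDef :=
    hD.inv.add (PosDef.one.smul (inv_pos.2 hc))
  rw [hE.inv_le_smul_one_iff (by positivity), add_smul]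
  exact add_le_add_left ((hD.le_smul_one_iff_inv_smul_one_le_inv hM).1 h) _

lemma IsHermitian.eigenvalues_le_of_le_smul_one {A : Matrix n n 𝕜} (hA : A.IsHermitian)
    {r : ℝ} (h : A ≤ r • 1) (i : n) : hA.eigenvalues i ≤ r := by
  rw [← Algebra.algebraMap_eq_smul_one, le_algebraMap_iff_spectrum_le hA.isSelfAdjoint] at h
  exact h _ (hA.eigenvalues_mem_spectrum_real i)

lemma add_le_smul_one_of_le {A B : Matrix n n 𝕜} {a b M : ℝ} (hA : A ≤ a • 1) (hB : B ≤ b • 1)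
    (h : a + b ≤ M) : A + B ≤ M • 1 :=
  calc A + B ≤ a • 1 + b • 1 := add_le_add hA hB
    _ = (a + b) • 1 := (add_smul ..).symm
    _ ≤ M • 1 := smul_le_smul_of_nonneg_right h zero_le_one

end RCLike

lemma vecMulVec_self_le_sum_sq_smul_one (v : n → ℝ) : vecMulVec v v ≤ (∑ i, v i ^ 2) • 1 := by
  rw [le_iff, posSemidef_iff_dotProduct_mulVec]
  refine ⟨?_, fun y => ?_⟩
  · have := (posSemidef_vecMulVec_self_star v).isHermitian
    rw [star_trivial] at this
    exact (isHermitian_one.smul (IsSelfAdjoint.all _)).sub this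
  · have hcs : (v ⬝ᵥ y) ^ 2 ≤ (∑ i, v i ^ 2) * (y ⬝ᵥ y) := by
      simpa [dotProduct, sq] using Finset.sum_mul_sq_le_sq_mul_sq Finset.univ v y
    rw [star_trivial, sub_mulVec, smul_mulVec, one_mulVec, vecMulVec_mulVec, dotProduct_sub,
      dotProduct_smul, op_smul_eq_smul, dotProduct_smul, smul_eq_mul, smul_eq_mul,
      dotProduct_comm y v]
    linarith

end Matrix

/-- Eigenvalue bound for the LASER covariance recursion:
D₁ = bI + x₁x₁ᵀ, D_t = (D_{t-1}⁻¹ + c⁻¹I)⁻¹ + x_t x_tᵀ with ‖x_t‖² ≤ X²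
implies every eigenvalue of D_t is at most
max{(3X² + √(X⁴ + 4X²c))/2, b + X²}. -/
theorem stmt_2 (d : ℕ) (b c X : ℝ) (hb : 0 < b) (hc : 0 < c)
    (x : ℕ → Fin d → ℝ) (hx : ∀ t, ∑ i, (x t i) ^ 2 ≤ X ^ 2)
    (D : ℕ → Matrix (Fin d) (Fin d) ℝ)
    (hD1 : D 1 = b • (1 : Matrix (Fin d) (Fin d) ℝ) + vecMulVec (x 1) (x 1))
    (hrec : ∀ t, 2 ≤ t →
      D t = ((D (t - 1))⁻¹ + c⁻¹ • (1 : Matrix (Fin d) (Fin d) ℝ))⁻¹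
              + vecMulVec (x t) (x t))
    (hpd : ∀ t, 1 ≤ t → (D t).PosDef) :
    ∀ t, 1 ≤ t → ∀ (h : (D t).IsHermitian) (i : Fin d),
      h.eigenvalues i ≤
        max ((3 * X ^ 2 + Real.sqrt (X ^ 4 + 4 * X ^ 2 * c)) / 2) (b + X ^ 2) := by
  intro t ht h i
  set M := max ((3 * X ^ 2 + Real.sqrt (X ^ 4 + 4 * X ^ 2 * c)) / 2) (b + X ^ 2)
  have hM : 0 < M := (by positivity : 0 < b + X ^ 2).trans_le (le_max_right _ _)
  have hfix : (M⁻¹ + c⁻¹)⁻¹ + X ^ 2 ≤ M := by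
    refine inv_add_inv_inv_add_le hM hc (sq_nonneg X) (le_trans ?_ (le_max_left _ _))
    rw [← pow_mul]
    linarith [sq_nonneg X]
  have hrank (s : ℕ) : vecMulVec (x s) (x s) ≤ X ^ 2 • 1 :=
    (vecMulVec_self_le_sum_sq_smul_one _).trans (smul_le_smul_of_nonneg_right (hx s) zero_le_one)
  have hbound : ∀ s, 1 ≤ s → D s ≤ M • 1 := by
    intro s hs
    induction s, hs using Nat.le_induction with
    | base => exact hD1 ▸ add_le_smul_one_of_le le_rfl (hrank 1) (le_max_right _ _)
    | succ s hs ih =>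
      rw [hrec (s + 1) (by omega), Nat.add_sub_cancel]
      exact add_le_smul_one_of_le ((hpd s hs).inv_add_smul_one_inv_le hM hc ih) (hrank _) hfix
  exact h.eigenvalues_le_of_le_smul_one (hbound t ht) i
end

section
/- Let D ≻ 0 be a d×d positive definite real matrix, c > 0, and x ∈ ℝ^d. Define D' = (I + c⁻¹D)⁻¹ and D₊ = (D⁻¹ + c⁻¹I)⁻¹ + xxᵀ. Then the matrix D' D₊⁻¹ x xᵀ D₊⁻¹ D' + D'(D₊⁻¹ D' + c⁻¹I) − D⁻¹ is negative semidefinite; in fact it equals −(xᵀ(D⁻¹+c⁻¹I)x) · (D⁻¹ x xᵀ D⁻¹) / (1 + xᵀ(D⁻¹+c⁻¹I)x)². -/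
/-!
Put `A = D⁻¹ + c⁻¹ I`, which is positive definite and commutes with `D⁻¹`. Since
`I + c⁻¹ D = D A`, we get `D' = A⁻¹ D⁻¹`, hence `D' A = A D' = D⁻¹`, and Sherman–Morrison gives
`D₊⁻¹ = A - A x xᵀ A / (1 + s)` with `s = xᵀ A x ≥ 0`. Because `x xᵀ A x xᵀ = s x xᵀ`, this yields
`D' D₊⁻¹ x = D⁻¹ x / (1 + s)` and `D' (D₊⁻¹ D' + c⁻¹ I) = D⁻¹ - D⁻¹ x xᵀ D⁻¹ / (1 + s)`, so the
whole expression collapses to `(1 / (1 + s)² - 1 / (1 + s)) D⁻¹ x xᵀ D⁻¹`.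
-/

open Matrix

theorem Matrix.vecMulVec_mul_mul_vecMulVec {l m p q R : Type*} [Fintype m] [Fintype p]
    [CommSemiring R] (u : l → R) (v : m → R) (A : Matrix m p R) (w : p → R) (z : q → R) :
    vecMulVec u v * A * vecMulVec w z = (v ⬝ᵥ A *ᵥ w) • vecMulVec u z := by
  rw [vecMulVec_mul, vecMulVec_mul_vecMulVec, vecMulVec_smul, dotProduct_mulVec]

theorem Matrix.inv_add_vecMulVec {n K : Type*} [Fintype n] [DecidableEq n] [Field K]
    {B : Matrix n n K} (hB : IsUnit B) {u v : n → K} (h : 1 + v ⬝ᵥ B⁻¹ *ᵥ u ≠ 0) :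
    (B + vecMulVec u v)⁻¹ = B⁻¹ - (1 + v ⬝ᵥ B⁻¹ *ᵥ u)⁻¹ • (B⁻¹ * vecMulVec u v * B⁻¹) := by
  set t := 1 + v ⬝ᵥ B⁻¹ *ᵥ u
  have hBB : B * B⁻¹ = 1 := mul_nonsing_inv B ((isUnit_iff_isUnit_det B).mp hB)
  apply inv_eq_right_inv
  calc (B + vecMulVec u v) * (B⁻¹ - t⁻¹ • (B⁻¹ * vecMulVec u v * B⁻¹))
      = 1 + (1 - t⁻¹ * t) • (vecMulVec u v * B⁻¹) := by
        simp only [add_mul, mul_sub, mul_smul_comm, ← Matrix.mul_assoc, hBB, one_mul,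
          vecMulVec_mul_mul_vecMulVec, smul_mul_assoc]
        module
    _ = 1 := by rw [inv_mul_cancel₀ h, sub_self, zero_smul, add_zero]

theorem Matrix.inv_one_add_smul {n K : Type*} [Fintype n] [DecidableEq n] [Field K]
    {D : Matrix n n K} (hD : IsUnit D) (a : K) : (1 + a • D)⁻¹ = (D⁻¹ + a • 1)⁻¹ * D⁻¹ := by
  rw [← Matrix.mul_inv_rev, mul_add, mul_nonsing_inv D ((isUnit_iff_isUnit_det D).mp hD),
    mul_smul_one]

theorem rankOne_update_sandwich_eq {K R : Type*} [Field K] [Ring R] [Algebra K R]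
    {E A D' X P : R} {a s : K} (hA : A = E + a • 1) (hDA : D' * A = E) (hAD : A * D' = E)
    (hX : X * A * X = s • X) (hs : 1 + s ≠ 0) (hP : P = A - (1 + s)⁻¹ • (A * X * A)) :
    D' * P * X * P * D' + D' * (P * D' + a • 1) - E = -(s / (1 + s) ^ 2) • (E * X * E) := by
  set τ := (1 + s)⁻¹ with hτ_def
  have hτ : 1 - τ * s = τ := by rw [hτ_def]; field_simp; ring
  have hτ2 : τ ^ 2 - τ = -(s / (1 + s) ^ 2) := by rw [hτ_def]; field_simp; ring
  clear_value τ
  have hDP : D' * P = E - τ • (E * X * A) := by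
    rw [hP, mul_sub, mul_smul_comm, ← mul_assoc, ← mul_assoc, hDA]
  have hPD : P * D' = E - τ • (A * X * E) := by
    rw [hP, sub_mul, smul_mul_assoc, mul_assoc, hAD]
  have hDPX : D' * P * X = τ • (E * X) := by
    rw [hDP, sub_mul, smul_mul_assoc, mul_assoc E X A, mul_assoc E, hX, mul_smul_comm]
    linear_combination (norm := module) hτ • (E * X)
  have hXPD : X * (P * D') = τ • (X * E) := by
    rw [hPD, mul_sub, mul_smul_comm, ← mul_assoc, ← mul_assoc, hX, smul_mul_assoc]
    linear_combination (norm := module) hτ • (X * E)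
  have hED : E * D' + a • D' = E := by
    rw [← smul_one_mul, ← add_mul, ← hA, hAD]
  calc D' * P * X * P * D' + D' * (P * D' + a • 1) - E
      = (D' * P * X) * (P * D') + (D' * P) * D' + a • D' - E := by
        simp only [mul_add, mul_smul_comm, mul_one, mul_assoc, add_assoc]
    _ = -(s / (1 + s) ^ 2) • (E * X * E) := by
        rw [hDPX, smul_mul_assoc, mul_assoc E X, hXPD, mul_smul_comm, smul_smul, ← mul_assoc,
          hDP, sub_mul, smul_mul_assoc, mul_assoc (E * X) A D', hAD]
        linear_combination (norm := module) hED + hτ2 • (E * X * E)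

/-- The key matrix inequality for LASER: with D' = (I + c⁻¹D)⁻¹ and
D₊ = (D⁻¹ + c⁻¹I)⁻¹ + xxᵀ, the matrix
D' D₊⁻¹ x xᵀ D₊⁻¹ D' + D'(D₊⁻¹ D' + c⁻¹I) − D⁻¹ is negative semidefinite
(its negation is positive semidefinite); in fact it equals
−(xᵀ(D⁻¹+c⁻¹I)x)·(D⁻¹ x xᵀ D⁻¹)/(1 + xᵀ(D⁻¹+c⁻¹I)x)². -/
theorem stmt_3 (d : ℕ) (c : ℝ) (hc : 0 < c)
    (D : Matrix (Fin d) (Fin d) ℝ) (hD : D.PosDef) (x : Fin d → ℝ)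
    (D' Dplus : Matrix (Fin d) (Fin d) ℝ)
    (hD' : D' = ((1 : Matrix (Fin d) (Fin d) ℝ) + c⁻¹ • D)⁻¹)
    (hDplus : Dplus = (D⁻¹ + c⁻¹ • (1 : Matrix (Fin d) (Fin d) ℝ))⁻¹ + vecMulVec x x) :
    (-(D' * Dplus⁻¹ * vecMulVec x x * Dplus⁻¹ * D'
        + D' * (Dplus⁻¹ * D' + c⁻¹ • (1 : Matrix (Fin d) (Fin d) ℝ)) - D⁻¹)).PosSemidef
    ∧ D' * Dplus⁻¹ * vecMulVec x x * Dplus⁻¹ * D'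
        + D' * (Dplus⁻¹ * D' + c⁻¹ • (1 : Matrix (Fin d) (Fin d) ℝ)) - D⁻¹
      = -((x ⬝ᵥ ((D⁻¹ + c⁻¹ • (1 : Matrix (Fin d) (Fin d) ℝ)) *ᵥ x))
            / (1 + x ⬝ᵥ ((D⁻¹ + c⁻¹ • (1 : Matrix (Fin d) (Fin d) ℝ)) *ᵥ x)) ^ 2)
          • (D⁻¹ * vecMulVec x x * D⁻¹) := by
  set A := D⁻¹ + c⁻¹ • (1 : Matrix (Fin d) (Fin d) ℝ) with hA
  have hApos : A.PosDef := hD.inv.add (PosDef.one.smul (inv_pos.mpr hc))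
  have hAdet : IsUnit A.det := (isUnit_iff_isUnit_det A).mp hApos.isUnit
  have hs : 0 ≤ x ⬝ᵥ A *ᵥ x := by simpa using hApos.posSemidef.dotProduct_mulVec_nonneg x
  have hDA : D' * A = D⁻¹ := by
    have hcomm : Commute D⁻¹ A := (Commute.refl _).add_right ((Commute.one_right _).smul_right _)
    rw [hD', inv_one_add_smul hD.isUnit, ← hA, Matrix.mul_assoc, hcomm.eq,
      nonsing_inv_mul_cancel_left A _ hAdet]
  have hAD : A * D' = D⁻¹ := by
    rw [hD', inv_one_add_smul hD.isUnit, ← hA, ← Matrix.mul_assoc, mul_nonsing_inv A hAdet,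
      Matrix.one_mul]
  have hXAX : vecMulVec x x * A * vecMulVec x x = (x ⬝ᵥ A *ᵥ x) • vecMulVec x x :=
    vecMulVec_mul_mul_vecMulVec x x A x x
  have hAinv : A⁻¹⁻¹ = A := nonsing_inv_nonsing_inv A hAdet
  have hDplus_inv : Dplus⁻¹ = A - (1 + x ⬝ᵥ A *ᵥ x)⁻¹ • (A * vecMulVec x x * A) := by
    rw [hDplus, inv_add_vecMulVec (isUnit_nonsing_inv_iff.mpr hApos.isUnit)
      (by rw [hAinv]; positivity), hAinv]
  have hid := rankOne_update_sandwich_eq hA hDA hAD hXAX (by positivity) hDplus_inv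
  refine ⟨?_, hid⟩
  rw [hid, neg_smul, neg_neg]
  have hDX : (D⁻¹ * vecMulVec x x * D⁻¹).PosSemidef := by
    have hsymm : D⁻¹ᵀ = D⁻¹ := by simpa using hD.inv.isHermitian.eq
    simpa [hsymm] using
      (posSemidef_vecMulVec_self_star x).conjTranspose_mul_mul_same D⁻¹
  exact hDX.smul (by positivity)
end

section
/- Let D ≻ 0 be a d×d positive definite matrix, c > 0, and x ∈ ℝ^d. Define D₊ = (D⁻¹ + c⁻¹I)⁻¹ + xxᵀ. Then D₊⁻¹(I + c⁻¹D)⁻¹ = D⁻¹ − (D⁻¹ + c⁻¹I) x xᵀ D⁻¹ / (1 + xᵀ(D⁻¹ + c⁻¹I)x). -/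
/-!
With `A = D⁻¹ + c⁻¹ I` one has `I + c⁻¹ D = D A` and `A D₊ = I + (A x) xᵀ`, so
`D₊⁻¹ (I + c⁻¹ D)⁻¹ = (D A D₊)⁻¹ = (I + (A x) xᵀ)⁻¹ D⁻¹`, and the Sherman–Morrison formula for the
rank-one update of the identity gives the claim. Positive definiteness of `A` makes it invertible and
keeps the denominator `1 + xᵀ A x` positive.
-/

open Matrix

namespace Matrix

variable {n K : Type*} [Fintype n] [DecidableEq n]

theorem inv_one_add_vecMulVec [Field K] (u v : n → K) (h : 1 + v ⬝ᵥ u ≠ 0) :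
    (1 + vecMulVec u v)⁻¹ = 1 - (1 + v ⬝ᵥ u)⁻¹ • vecMulVec u v := by
  apply inv_eq_right_inv
  have hsq : vecMulVec u v * vecMulVec u v = (v ⬝ᵥ u) • vecMulVec u v := by
    rw [vecMulVec_mul_vecMulVec, vecMulVec_smul]
  calc (1 + vecMulVec u v) * (1 - (1 + v ⬝ᵥ u)⁻¹ • vecMulVec u v)
      = 1 + (1 - (1 + v ⬝ᵥ u)⁻¹ * (1 + v ⬝ᵥ u)) • vecMulVec u v := by
        simp only [add_mul, mul_sub, one_mul, mul_one, mul_smul_comm, hsq]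
        module
    _ = 1 := by rw [inv_mul_cancel₀ h, sub_self, zero_smul, add_zero]

theorem PosDef.inv_add_smul_one {D : Matrix n n ℝ} (hD : D.PosDef) {t : ℝ} (ht : 0 ≤ t) :
    (D⁻¹ + t • (1 : Matrix n n ℝ)).PosDef :=
  hD.inv.add_posSemidef (PosSemidef.one.smul ht)

end Matrix

/-- With D₊ = (D⁻¹ + c⁻¹I)⁻¹ + xxᵀ,
D₊⁻¹(I + c⁻¹D)⁻¹ = D⁻¹ − (D⁻¹ + c⁻¹I)xxᵀD⁻¹ / (1 + xᵀ(D⁻¹ + c⁻¹I)x). -/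
theorem stmt_4 (d : ℕ) (c : ℝ) (hc : 0 < c)
    (D : Matrix (Fin d) (Fin d) ℝ) (hD : D.PosDef) (x : Fin d → ℝ)
    (Dplus : Matrix (Fin d) (Fin d) ℝ)
    (hDplus : Dplus = (D⁻¹ + c⁻¹ • (1 : Matrix (Fin d) (Fin d) ℝ))⁻¹ + vecMulVec x x) :
    Dplus⁻¹ * ((1 : Matrix (Fin d) (Fin d) ℝ) + c⁻¹ • D)⁻¹
      = D⁻¹ - (1 + x ⬝ᵥ ((D⁻¹ + c⁻¹ • (1 : Matrix (Fin d) (Fin d) ℝ)) *ᵥ x))⁻¹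
          • ((D⁻¹ + c⁻¹ • (1 : Matrix (Fin d) (Fin d) ℝ)) * vecMulVec x x * D⁻¹) := by
  set A := D⁻¹ + c⁻¹ • (1 : Matrix (Fin d) (Fin d) ℝ)
  have hA : A.PosDef := hD.inv_add_smul_one (inv_nonneg.mpr hc.le)
  have hdenom : 1 + x ⬝ᵥ (A *ᵥ x) ≠ 0 := by
    have := hA.posSemidef.dotProduct_mulVec_nonneg x
    rw [star_trivial] at this
    positivity
  have hfactor : 1 + c⁻¹ • D = D * A := by
    rw [mul_add, mul_nonsing_inv D hD.det_pos.ne'.isUnit, mul_smul_comm, mul_one]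
  have hupdate : A * Dplus = 1 + vecMulVec (A *ᵥ x) x := by
    rw [hDplus, mul_add, mul_nonsing_inv A hA.det_pos.ne'.isUnit, mul_vecMulVec]
  calc Dplus⁻¹ * (1 + c⁻¹ • D)⁻¹ = (D * (A * Dplus))⁻¹ := by
        rw [hfactor, ← Matrix.mul_inv_rev, mul_assoc]
    _ = (1 + vecMulVec (A *ᵥ x) x)⁻¹ * D⁻¹ := by rw [hupdate, Matrix.mul_inv_rev]
    _ = _ := by
        rw [inv_one_add_vecMulVec _ _ hdenom, sub_mul, one_mul, smul_mul_assoc, mul_vecMulVec]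
end

section
/- Let D_t ≻ 0 be positive definite d×d matrices satisfying D_t = (D_{t-1}⁻¹ + c⁻¹I)⁻¹ + x_t x_tᵀ for t ≥ 1 with c > 0, x_t ∈ ℝ^d. Then for each t, x_tᵀ D_t⁻¹ x_t ≤ ln(det D_t / det D_{t-1}) + ln det(I + c⁻¹ D_{t-1}). -/
/-!
Put `A = (D_{t-1}⁻¹ + c⁻¹ I)⁻¹ ≻ 0`, so that `D_t = A + x xᵀ`, and `s = xᵀ A⁻¹ x ≥ 0`.
By the matrix determinant lemma `det D_t = det A · (1 + s)`, and since `D_t (A⁻¹ x) = (1 + s) x`,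
`xᵀ D_t⁻¹ x = s / (1 + s) = 1 - (1 + s)⁻¹ ≤ ln (1 + s) = ln (det D_t / det A)`.
Finally `I + c⁻¹ D_{t-1} = D_{t-1} (D_{t-1}⁻¹ + c⁻¹ I)`, so `det A = det D_{t-1} / det (I + c⁻¹ D_{t-1})`.
-/

open Matrix

theorem Matrix.det_add_vecMulVec {n α : Type*} [Fintype n] [DecidableEq n] [CommRing α]
    {A : Matrix n n α} (hA : IsUnit A.det) (u v : n → α) :
    (A + vecMulVec u v).det = A.det * (1 + v ⬝ᵥ (A⁻¹ *ᵥ u)) := by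
  rw [vecMulVec_eq Unit, det_add_replicateCol_mul_replicateRow hA, Matrix.mul_assoc,
    ← replicateCol_mulVec]
  simp only [det_unique, add_apply, one_apply_eq, replicateRow_mul_replicateCol_apply]

theorem Matrix.inv_add_vecMulVec_mulVec {n 𝕜 : Type*} [Fintype n] [DecidableEq n] [Field 𝕜]
    {A : Matrix n n 𝕜} (hA : IsUnit A.det) (u v : n → 𝕜) (h : 1 + v ⬝ᵥ (A⁻¹ *ᵥ u) ≠ 0) :
    (A + vecMulVec u v)⁻¹ *ᵥ u = (1 + v ⬝ᵥ (A⁻¹ *ᵥ u))⁻¹ • (A⁻¹ *ᵥ u) := by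
  have hM : IsUnit (A + vecMulVec u v).det := by
    rw [det_add_vecMulVec hA]
    exact hA.mul h.isUnit
  have hMw : (A + vecMulVec u v) *ᵥ (A⁻¹ *ᵥ u) = (1 + v ⬝ᵥ (A⁻¹ *ᵥ u)) • u := by
    rw [add_mulVec, mulVec_mulVec, mul_nonsing_inv _ hA, one_mulVec, vecMulVec_mulVec,
      op_smul_eq_smul, add_smul, one_smul]
  have hw : (A + vecMulVec u v)⁻¹ *ᵥ ((A + vecMulVec u v) *ᵥ (A⁻¹ *ᵥ u)) = A⁻¹ *ᵥ u := by
    rw [mulVec_mulVec, nonsing_inv_mul _ hM, one_mulVec]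
  rw [hMw, mulVec_smul] at hw
  rwa [eq_inv_smul_iff₀ h]

theorem Matrix.det_inv_add_smul_one_inv {n 𝕜 : Type*} [Fintype n] [DecidableEq n] [Field 𝕜]
    {D : Matrix n n 𝕜} (hD : D.det ≠ 0) (a : 𝕜) :
    (D⁻¹ + a • (1 : Matrix n n 𝕜))⁻¹.det = D.det / (1 + a • D).det := by
  have hfactor : 1 + a • D = D * (D⁻¹ + a • 1) := by
    rw [Matrix.mul_add, mul_nonsing_inv _ hD.isUnit, mul_smul_comm, Matrix.mul_one]
  rw [hfactor, det_mul, det_nonsing_inv, Ring.inverse_eq_inv', div_mul_cancel_left₀ hD]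

theorem Real.div_one_add_le_log_one_add {s : ℝ} (hs : -1 < s) :
    s / (1 + s) ≤ Real.log (1 + s) := by
  have h1s : 1 + s ≠ 0 := by linarith
  calc s / (1 + s) = 1 - (1 + s)⁻¹ := by field_simp; ring
    _ ≤ Real.log (1 + s) := Real.one_sub_inv_le_log_of_pos (by linarith)

theorem Matrix.PosDef.dotProduct_inv_add_vecMulVec_mulVec_le_log_det_div {n : Type*}
    [Fintype n] [DecidableEq n] {A : Matrix n n ℝ} (hA : A.PosDef) (v : n → ℝ) :
    v ⬝ᵥ ((A + vecMulVec v v)⁻¹ *ᵥ v) ≤ Real.log ((A + vecMulVec v v).det / A.det) := by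
  have hAdet : IsUnit A.det := hA.det_pos.ne'.isUnit
  have hs : 0 ≤ v ⬝ᵥ (A⁻¹ *ᵥ v) := hA.inv.posSemidef.dotProduct_mulVec_nonneg v
  rw [inv_add_vecMulVec_mulVec hAdet v v (by positivity), det_add_vecMulVec hAdet,
    mul_div_cancel_left₀ _ hA.det_pos.ne', dotProduct_smul, smul_eq_mul, inv_mul_eq_div]
  exact Real.div_one_add_le_log_one_add (by linarith)

/-- For the recursion D_t = (D_{t-1}⁻¹ + c⁻¹I)⁻¹ + x_t x_tᵀ with all D_t ≻ 0:
x_tᵀ D_t⁻¹ x_t ≤ ln(det D_t / det D_{t-1}) + ln det(I + c⁻¹ D_{t-1}). -/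
theorem stmt_5 (d : ℕ) (c : ℝ) (hc : 0 < c)
    (x : ℕ → Fin d → ℝ) (D : ℕ → Matrix (Fin d) (Fin d) ℝ)
    (hpd : ∀ t, (D t).PosDef)
    (hrec : ∀ t, 1 ≤ t →
      D t = ((D (t - 1))⁻¹ + c⁻¹ • (1 : Matrix (Fin d) (Fin d) ℝ))⁻¹
              + vecMulVec (x t) (x t)) :
    ∀ t, 1 ≤ t →
      x t ⬝ᵥ ((D t)⁻¹ *ᵥ x t)
        ≤ Real.log ((D t).det / (D (t - 1)).det)
          + Real.log ((1 : Matrix (Fin d) (Fin d) ℝ) + c⁻¹ • D (t - 1)).det := by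
  intro t ht
  have hc' : 0 ≤ c⁻¹ := inv_nonneg.mpr hc.le
  have hK : ((D (t - 1))⁻¹ + c⁻¹ • (1 : Matrix (Fin d) (Fin d) ℝ)).PosDef :=
    (hpd _).inv.add_posSemidef (PosSemidef.one.smul hc')
  have hI : ((1 : Matrix (Fin d) (Fin d) ℝ) + c⁻¹ • D (t - 1)).PosDef :=
    PosDef.one.add_posSemidef ((hpd _).posSemidef.smul hc')
  have key := hK.inv.dotProduct_inv_add_vecMulVec_mulVec_le_log_det_div (x t)
  rwa [← hrec t ht, det_inv_add_smul_one_inv (hpd _).det_pos.ne', div_div_eq_mul_div,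
    mul_div_right_comm, Real.log_mul (div_pos (hpd t).det_pos (hpd _).det_pos).ne'
      hI.det_pos.ne'] at key
end

section
/- With Q_t and P_t as defined via Q_t(u₁,...,u_t) = b‖u₁‖² + c·Σ_{s<t}‖u_{s+1}−u_s‖² + Σ_{s≤t}(y_s − u_sᵀx_s)², the function P_t has the closed form P_t(u) = uᵀD_t u − 2uᵀe_t + f_t, where D₁ = bI + x₁x₁ᵀ, D_t = (D_{t-1}⁻¹ + c⁻¹I)⁻¹ + x_t x_tᵀ, e₁ = y₁x₁, e_t = (I + c⁻¹D_{t-1})⁻¹e_{t-1} + y_t x_t, f₁ = y₁², and f_t = f_{t-1} − e_{t-1}ᵀ(cI + D_{t-1})⁻¹e_{t-1} + y_t². -/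
/-!
Dynamic programming: `P_{t+1}(v) = min_w (P_t w + c‖v - w‖² + (y_{t+1} - vᵀx_{t+1})²)`.
If `P_t(w) = wᵀD_t w - 2wᵀe_t + f_t` with `D_t` positive definite, the expression in `w` is a
quadratic with matrix `cI + D_t` and linear term `e_t + cv`; completing the square gives its
minimum `f_t + c‖v‖² + (y_{t+1} - vᵀx_{t+1})² - (e_t + cv)ᵀ(cI + D_t)⁻¹(e_t + cv)`, and the
Woodbury identity `(D⁻¹ + c⁻¹I)⁻¹ = cI - c²(cI + D)⁻¹` puts this in the stated form.
-/

open Matrix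

section Inverse
variable {K ι : Type*} [Field K] [Fintype ι] [DecidableEq ι]

theorem Matrix.inv_add_smul_one_inv {A : Matrix ι ι K} {c : K} (hc : c ≠ 0)
    (hA : IsUnit A.det) (hcA : IsUnit (c • (1 : Matrix ι ι K) + A).det) :
    (A⁻¹ + c⁻¹ • (1 : Matrix ι ι K))⁻¹ = c • 1 - c ^ 2 • (c • 1 + A)⁻¹ := by
  refine inv_eq_right_inv ?_
  have hA_mul : A⁻¹ * (c • 1 + A) = c • A⁻¹ + 1 := by
    rw [Matrix.mul_add, nonsing_inv_mul _ hA, Matrix.mul_smul, Matrix.mul_one]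
  have hA_inv : (c • A⁻¹ + 1) * (c • 1 + A)⁻¹ = A⁻¹ := by
    rw [← hA_mul, Matrix.mul_assoc, mul_nonsing_inv _ hcA, Matrix.mul_one]
  calc (A⁻¹ + c⁻¹ • 1) * (c • 1 - c ^ 2 • (c • 1 + A)⁻¹)
      = c • A⁻¹ + 1 - c • ((c • A⁻¹ + 1) * (c • 1 + A)⁻¹) := by
        simp only [Matrix.mul_sub, Matrix.add_mul, Matrix.mul_smul, Matrix.smul_mul,
          Matrix.mul_one, Matrix.one_mul, smul_smul, smul_add]
        rw [mul_inv_cancel₀ hc, one_smul, show c ^ 2 * c⁻¹ = c by field_simp, sq]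
    _ = 1 := by rw [hA_inv]; abel

theorem Matrix.one_add_inv_smul_inv {A : Matrix ι ι K} {c : K} (hc : c ≠ 0)
    (hcA : IsUnit (c • (1 : Matrix ι ι K) + A).det) :
    ((1 : Matrix ι ι K) + c⁻¹ • A)⁻¹ = c • (c • 1 + A)⁻¹ := by
  refine inv_eq_right_inv ?_
  rw [show (1 : Matrix ι ι K) + c⁻¹ • A = c⁻¹ • (c • 1 + A) by
      rw [smul_add, smul_smul, inv_mul_cancel₀ hc, one_smul],
    Matrix.smul_mul, Matrix.mul_smul, smul_smul, inv_mul_cancel₀ hc, one_smul,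
    mul_nonsing_inv _ hcA]

end Inverse

section Quadratic
variable {ι : Type*} [Fintype ι]

def quadratic (M : Matrix ι ι ℝ) (z : ι → ℝ) (k : ℝ) (w : ι → ℝ) : ℝ :=
  w ⬝ᵥ (M *ᵥ w) - 2 * (w ⬝ᵥ z) + k

theorem Matrix.IsSymm.dotProduct_mulVec_comm {M : Matrix ι ι ℝ} (hM : M.IsSymm)
    (v w : ι → ℝ) : v ⬝ᵥ (M *ᵥ w) = w ⬝ᵥ (M *ᵥ v) := by
  rw [dotProduct_mulVec, ← mulVec_transpose, hM.eq, dotProduct_comm]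

theorem dotProduct_vecMulVec_self_mulVec (x v : ι → ℝ) :
    v ⬝ᵥ (vecMulVec x x *ᵥ v) = (v ⬝ᵥ x) ^ 2 := by
  rw [vecMulVec_mulVec, op_smul_eq_smul, dotProduct_smul, smul_eq_mul, dotProduct_comm x v, sq]

theorem posSemidef_vecMulVec_self (x : ι → ℝ) : (vecMulVec x x).PosSemidef := by
  simpa using posSemidef_vecMulVec_self_star x

end Quadratic

theorem Matrix.posDef_smul_one_add {ι : Type*} [DecidableEq ι] {c : ℝ} (hc : 0 < c)
    {A : Matrix ι ι ℝ} (hA : A.PosSemidef) : (c • 1 + A).PosDef :=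
  (PosDef.one.smul hc).add_posSemidef hA

section CompleteSquare
variable {ι : Type*} [Fintype ι] [DecidableEq ι]

theorem Matrix.PosDef.inv_add_smul_one_inv_add_vecMulVec {A : Matrix ι ι ℝ} (hA : A.PosDef)
    {c : ℝ} (hc : 0 < c) (x : ι → ℝ) : ((A⁻¹ + c⁻¹ • 1)⁻¹ + vecMulVec x x).PosDef :=
  (hA.inv.add (PosDef.one.smul (inv_pos.mpr hc))).inv.add_posSemidef
    (posSemidef_vecMulVec_self x)

theorem quadratic_eq_add_completeSquare {M : Matrix ι ι ℝ} (hM : M.PosDef) (z : ι → ℝ) (k : ℝ)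
    (w : ι → ℝ) :
    quadratic M z k w
      = (k - z ⬝ᵥ (M⁻¹ *ᵥ z)) + (w - M⁻¹ *ᵥ z) ⬝ᵥ (M *ᵥ (w - M⁻¹ *ᵥ z)) := by
  have hMz : M *ᵥ (M⁻¹ *ᵥ z) = z := by
    rw [mulVec_mulVec, mul_nonsing_inv _ (isUnit_iff_isUnit_det _ |>.mp hM.isUnit), one_mulVec]
  have hsymm : (M⁻¹ *ᵥ z) ⬝ᵥ (M *ᵥ w) = w ⬝ᵥ z := by
    rw [(isHermitian_iff_isSymm.mp hM.isHermitian).dotProduct_mulVec_comm, hMz]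
  rw [quadratic, mulVec_sub, hMz]
  simp only [dotProduct_sub, sub_dotProduct, hsymm]
  rw [dotProduct_comm (M⁻¹ *ᵥ z) z]
  ring

theorem isLeast_range_quadratic {M : Matrix ι ι ℝ} (hM : M.PosDef) (z : ι → ℝ) (k : ℝ) :
    IsLeast (Set.range (quadratic M z k)) (k - z ⬝ᵥ (M⁻¹ *ᵥ z)) := by
  refine ⟨⟨M⁻¹ *ᵥ z, by simp [quadratic_eq_add_completeSquare hM]⟩, ?_⟩
  rintro _ ⟨w, rfl⟩
  rw [quadratic_eq_add_completeSquare hM]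
  simpa using hM.posSemidef.dotProduct_mulVec_nonneg (w - M⁻¹ *ᵥ z)

theorem isLeast_range_quadratic_add_transition {A : Matrix ι ι ℝ} (hA : A.PosDef) {c : ℝ}
    (hc : 0 < c) (e : ι → ℝ) (f y : ℝ) (x v : ι → ℝ) :
    IsLeast
      (Set.range fun w => quadratic A e f w + (c * ((v - w) ⬝ᵥ (v - w)) + (y - v ⬝ᵥ x) ^ 2))
      (quadratic ((A⁻¹ + c⁻¹ • 1)⁻¹ + vecMulVec x x) ((1 + c⁻¹ • A)⁻¹ *ᵥ e + y • x)
        (f - e ⬝ᵥ ((c • 1 + A)⁻¹ *ᵥ e) + y ^ 2) v) := by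
  set M := c • (1 : Matrix ι ι ℝ) + A with hM_def
  have hM : M.PosDef := posDef_smul_one_add hc hA.posSemidef
  have hM_det : IsUnit M.det := (isUnit_iff_isUnit_det _).mp hM.isUnit
  have hfun : (fun w => quadratic A e f w + (c * ((v - w) ⬝ᵥ (v - w)) + (y - v ⬝ᵥ x) ^ 2))
      = quadratic M (e + c • v) (f + c * (v ⬝ᵥ v) + (y - v ⬝ᵥ x) ^ 2) := by
    funext w
    simp only [quadratic, hM_def, add_mulVec, smul_mulVec, one_mulVec, dotProduct_add,
      dotProduct_sub, sub_dotProduct, dotProduct_smul, smul_eq_mul]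
    rw [dotProduct_comm v w]
    ring
  have hsymm : e ⬝ᵥ (M⁻¹ *ᵥ v) = v ⬝ᵥ (M⁻¹ *ᵥ e) :=
    (isHermitian_iff_isSymm.mp hM.inv.isHermitian).dotProduct_mulVec_comm e v
  rw [hfun]
  convert isLeast_range_quadratic hM _ _ using 1
  rw [inv_add_smul_one_inv hc.ne' ((isUnit_iff_isUnit_det _).mp hA.isUnit) hM_det,
    one_add_inv_smul_inv hc.ne' hM_det, ← hM_def]
  simp only [quadratic, add_mulVec, mulVec_add, sub_mulVec, smul_mulVec, one_mulVec,
    mulVec_smul, dotProduct_add, add_dotProduct, dotProduct_sub, dotProduct_smul, smul_dotProduct,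
    smul_eq_mul, dotProduct_vecMulVec_self_mulVec, hsymm]
  ring

end CompleteSquare

theorem isLeast_fiber_add_transition {ι α β : Type*} [DecidableEq ι] [Add β] [Preorder β]
    [AddRightMono β] {F G : (ι → α) → β} {h : α → α → β} {g : α → β} {i j : ι} (hij : i ≠ j)
    (hF : ∀ u a, F (Function.update u j a) = F u) (hG : ∀ u, G u = F u + h (u i) (u j))
    (hg : ∀ w, IsLeast {r | ∃ u, u i = w ∧ F u = r} (g w)) {v : α} {m : β}
    (hm : IsLeast (Set.range fun w => g w + h w v) m) :
    IsLeast {r | ∃ u, u j = v ∧ G u = r} m := by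
  constructor
  · obtain ⟨w, hw⟩ := hm.1
    obtain ⟨u, hui, hFu⟩ := (hg w).1
    refine ⟨Function.update u j v, Function.update_self .., ?_⟩
    rw [hG, hF, Function.update_self, Function.update_of_ne hij, hui, hFu]
    exact hw
  · rintro _ ⟨u, rfl, rfl⟩
    calc m ≤ g (u i) + h (u i) (u j) := hm.2 ⟨u i, rfl⟩
      _ ≤ F u + h (u i) (u j) := by gcongr; exact (hg (u i)).2 ⟨u, rfl, rfl⟩
      _ = G u := (hG u).symm

section LaserObjective
variable {ι : Type*} [Fintype ι] (b c : ℝ) (x : ℕ → ι → ℝ) (y : ℕ → ℝ)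

def laserObjective (t : ℕ) (u : ℕ → ι → ℝ) : ℝ :=
  b * (u 1 ⬝ᵥ u 1) + c * ∑ s ∈ Finset.Icc 1 (t - 1), (u (s + 1) - u s) ⬝ᵥ (u (s + 1) - u s)
    + ∑ s ∈ Finset.Icc 1 t, (y s - u s ⬝ᵥ x s) ^ 2

theorem laserObjective_one (u : ℕ → ι → ℝ) :
    laserObjective b c x y 1 u = b * (u 1 ⬝ᵥ u 1) + (y 1 - u 1 ⬝ᵥ x 1) ^ 2 := by
  simp [laserObjective]

theorem laserObjective_succ {n : ℕ} (hn : 1 ≤ n) (u : ℕ → ι → ℝ) :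
    laserObjective b c x y (n + 1) u = laserObjective b c x y n u
      + (c * ((u (n + 1) - u n) ⬝ᵥ (u (n + 1) - u n))
        + (y (n + 1) - u (n + 1) ⬝ᵥ x (n + 1)) ^ 2) := by
  obtain ⟨k, rfl⟩ : ∃ k, n = k + 1 := ⟨n - 1, by omega⟩
  simp only [laserObjective, Nat.add_sub_cancel]
  rw [Finset.sum_Icc_succ_top (by omega : 1 ≤ k + 1),
    Finset.sum_Icc_succ_top (by omega : 1 ≤ k + 1 + 1)]
  ring

theorem laserObjective_update_succ [DecidableEq ι] {n : ℕ} (hn : 1 ≤ n) (u : ℕ → ι → ℝ)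
    (a : ι → ℝ) :
    laserObjective b c x y n (Function.update u (n + 1) a) = laserObjective b c x y n u := by
  have hu : ∀ s ≤ n, Function.update u (n + 1) a s = u s := fun s hs =>
    Function.update_of_ne (by omega) ..
  have h_diff : ∀ s ∈ Finset.Icc 1 (n - 1), Function.update u (n + 1) a (s + 1)
      - Function.update u (n + 1) a s = u (s + 1) - u s := fun s hs => by
    rw [Finset.mem_Icc] at hs
    rw [hu s (by omega), hu (s + 1) (by omega)]
  have h_point : ∀ s ∈ Finset.Icc 1 n, Function.update u (n + 1) a s = u s := fun s hs =>
    hu s (Finset.mem_Icc.mp hs).2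
  simp only [laserObjective, hu 1 hn]
  congr 1
  · congr 2
    exact Finset.sum_congr rfl fun s hs => by rw [h_diff s hs]
  · exact Finset.sum_congr rfl fun s hs => by rw [h_point s hs]

end LaserObjective

section LaserFibers
variable {ι : Type*} [Fintype ι] [DecidableEq ι] {b c : ℝ} {x : ℕ → ι → ℝ} {y : ℕ → ℝ}

theorem isLeast_laserObjective_one (v : ι → ℝ) :
    IsLeast {r | ∃ u, u 1 = v ∧ laserObjective b c x y 1 u = r}
      (quadratic (b • 1 + vecMulVec (x 1) (x 1)) (y 1 • x 1) (y 1 ^ 2) v) := by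
  have h_eq : ∀ u : ℕ → ι → ℝ, u 1 = v → laserObjective b c x y 1 u
      = quadratic (b • 1 + vecMulVec (x 1) (x 1)) (y 1 • x 1) (y 1 ^ 2) v := by
    rintro u rfl
    simp only [laserObjective_one, quadratic, add_mulVec, smul_mulVec, one_mulVec,
      dotProduct_add, dotProduct_smul, smul_eq_mul, dotProduct_vecMulVec_self_mulVec]
    ring
  exact ⟨⟨fun _ => v, rfl, h_eq _ rfl⟩, by rintro _ ⟨u, hu, rfl⟩; exact (h_eq u hu).ge⟩

theorem isLeast_laserObjective_succ (hc : 0 < c) {n : ℕ} (hn : 1 ≤ n) {A : Matrix ι ι ℝ}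
    (hA : A.PosDef) {e : ι → ℝ} {f : ℝ}
    (h_fiber : ∀ w,
      IsLeast {r | ∃ u, u n = w ∧ laserObjective b c x y n u = r} (quadratic A e f w))
    (v : ι → ℝ) :
    IsLeast {r | ∃ u, u (n + 1) = v ∧ laserObjective b c x y (n + 1) u = r}
      (quadratic ((A⁻¹ + c⁻¹ • 1)⁻¹ + vecMulVec (x (n + 1)) (x (n + 1)))
        ((1 + c⁻¹ • A)⁻¹ *ᵥ e + y (n + 1) • x (n + 1))
        (f - e ⬝ᵥ ((c • 1 + A)⁻¹ *ᵥ e) + y (n + 1) ^ 2) v) :=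
  isLeast_fiber_add_transition
    (h := fun w v => c * ((v - w) ⬝ᵥ (v - w)) + (y (n + 1) - v ⬝ᵥ x (n + 1)) ^ 2) (by omega)
    (laserObjective_update_succ b c x y hn) (laserObjective_succ b c x y hn) h_fiber
    (isLeast_range_quadratic_add_transition hA hc e f (y (n + 1)) (x (n + 1)) v)

end LaserFibers

/-- Closed form of the inner minimum of the LASER objective:
P_t(u) = uᵀD_t u − 2uᵀe_t + f_t, with D, e, f given by the recursions
D₁ = bI + x₁x₁ᵀ, D_t = (D_{t-1}⁻¹ + c⁻¹I)⁻¹ + x_t x_tᵀ, e₁ = y₁x₁,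
e_t = (I + c⁻¹D_{t-1})⁻¹e_{t-1} + y_t x_t, f₁ = y₁²,
f_t = f_{t-1} − e_{t-1}ᵀ(cI + D_{t-1})⁻¹e_{t-1} + y_t². -/
theorem stmt_9 (d : ℕ) (b c : ℝ) (hb : 0 < b) (hc : 0 < c)
    (x : ℕ → Fin d → ℝ) (y : ℕ → ℝ)
    (Q : ℕ → (ℕ → Fin d → ℝ) → ℝ)
    (hQ : ∀ t u, Q t u =
      b * ∑ i, (u 1 i) ^ 2
        + c * ∑ s ∈ Finset.Icc 1 (t - 1), ∑ i, (u (s + 1) i - u s i) ^ 2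
        + ∑ s ∈ Finset.Icc 1 t, (y s - ∑ i, u s i * x s i) ^ 2)
    (P : ℕ → (Fin d → ℝ) → ℝ)
    (hP : ∀ t v, IsLeast {r | ∃ u : ℕ → Fin d → ℝ, u t = v ∧ Q t u = r} (P t v))
    (D : ℕ → Matrix (Fin d) (Fin d) ℝ) (e : ℕ → Fin d → ℝ) (f : ℕ → ℝ)
    (hD1 : D 1 = b • (1 : Matrix (Fin d) (Fin d) ℝ) + vecMulVec (x 1) (x 1))
    (hDrec : ∀ t, 2 ≤ t →
      D t = ((D (t - 1))⁻¹ + c⁻¹ • (1 : Matrix (Fin d) (Fin d) ℝ))⁻¹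
              + vecMulVec (x t) (x t))
    (he1 : e 1 = y 1 • x 1)
    (herec : ∀ t, 2 ≤ t →
      e t = ((1 : Matrix (Fin d) (Fin d) ℝ) + c⁻¹ • D (t - 1))⁻¹ *ᵥ e (t - 1)
              + y t • x t)
    (hf1 : f 1 = (y 1) ^ 2)
    (hfrec : ∀ t, 2 ≤ t →
      f t = f (t - 1)
              - e (t - 1) ⬝ᵥ ((c • (1 : Matrix (Fin d) (Fin d) ℝ) + D (t - 1))⁻¹ *ᵥ e (t - 1))
              + (y t) ^ 2) :
    ∀ t, 1 ≤ t → ∀ u : Fin d → ℝ,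
      P t u = u ⬝ᵥ (D t *ᵥ u) - 2 * (u ⬝ᵥ e t) + f t := by
  obtain rfl : Q = laserObjective b c x y := by
    funext t u
    simp only [hQ, laserObjective, dotProduct, sq, Pi.sub_apply]
  have hD_posDef : ∀ t, 1 ≤ t → (D t).PosDef := by
    intro t ht
    induction t, ht using Nat.le_induction with
    | base => rw [hD1]; exact posDef_smul_one_add hb (posSemidef_vecMulVec_self (x 1))
    | succ n hn ih =>
      rw [hDrec (n + 1) (by omega), Nat.add_sub_cancel]
      exact ih.inv_add_smul_one_inv_add_vecMulVec hc (x (n + 1))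
  have h_fiber : ∀ t, 1 ≤ t → ∀ v,
      IsLeast {r | ∃ u, u t = v ∧ laserObjective b c x y t u = r}
        (quadratic (D t) (e t) (f t) v) := by
    intro t ht
    induction t, ht using Nat.le_induction with
    | base => rw [hD1, he1, hf1]; exact isLeast_laserObjective_one
    | succ n hn ih =>
      rw [hDrec (n + 1) (by omega), herec (n + 1) (by omega), hfrec (n + 1) (by omega),
        Nat.add_sub_cancel]
      exact isLeast_laserObjective_succ hc hn (hD_posDef n hn) ih
  exact fun t ht u => (hP t u).unique (h_fiber t ht u)
end

section
/- Let r > 0 and Σ⁻¹ = I + (1/r)·Σ_{t=1}^{T} x_t x_tᵀ where each ‖x_t‖ ≤ 1. Then ln det(Σ⁻¹) ≤ d·ln(1 + T/(rd)). -/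
/-!
The matrix `I + (1/r) Σ x_t x_tᵀ` is positive definite, so `ln det` is the sum of the logs of its
eigenvalues. By concavity of `ln` this is at most `d · ln` of their mean `trace / d`, and the trace
is `d + (1/r) Σ ‖x_t‖² ≤ d + T/r`.
-/

open Matrix Finset

theorem Real.sum_log_le_card_mul_log_mean {ι : Type*} (s : Finset ι) {z : ι → ℝ}
    (hz : ∀ i ∈ s, 0 < z i) :
    ∑ i ∈ s, Real.log (z i) ≤ #s * Real.log ((∑ i ∈ s, z i) / #s) := by
  rcases s.eq_empty_or_nonempty with rfl | hs
  · simp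
  have hcard : (0 : ℝ) < #s := by exact_mod_cast hs.card_pos
  have jensen := strictConcaveOn_log_Ioi.concaveOn.le_map_sum (t := s) (w := fun _ => (#s : ℝ)⁻¹)
    (p := z) (fun _ _ => by positivity) (by simp [hcard.ne']) hz
  simp only [smul_eq_mul, ← mul_sum] at jensen
  rw [div_eq_inv_mul]
  exact (inv_mul_le_iff₀ hcard).mp jensen

theorem Matrix.PosDef.log_det_le {n : Type*} [Fintype n] [DecidableEq n] {A : Matrix n n ℝ}
    (hA : A.PosDef) :
    Real.log A.det ≤ Fintype.card n * Real.log (A.trace / Fintype.card n) := by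
  have hpos := hA.eigenvalues_pos
  rw [hA.isHermitian.det_eq_prod_eigenvalues, hA.isHermitian.trace_eq_sum_eigenvalues]
  simp only [RCLike.ofReal_real_eq_id, id]
  rw [Real.log_prod fun i _ => (hpos i).ne']
  exact Real.sum_log_le_card_mul_log_mean univ fun i _ => hpos i

theorem Matrix.posDef_one_add_smul_sum_vecMulVec_self {n ι : Type*} [Fintype n] [DecidableEq n]
    (s : Finset ι) (x : ι → n → ℝ) {c : ℝ} (hc : 0 ≤ c) :
    (1 + c • ∑ t ∈ s, vecMulVec (x t) (x t)).PosDef := by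
  refine PosDef.one.add_posSemidef (PosSemidef.smul ?_ hc)
  exact posSemidef_sum s fun t _ => posSemidef_vecMulVec_self_star (x t)

theorem Matrix.trace_one_add_smul_sum_vecMulVec_self_le {n ι : Type*} [Fintype n]
    [DecidableEq n] (s : Finset ι) {x : ι → n → ℝ} (hx : ∀ t ∈ s, x t ⬝ᵥ x t ≤ 1) {c : ℝ}
    (hc : 0 ≤ c) :
    (1 + c • ∑ t ∈ s, vecMulVec (x t) (x t)).trace ≤ Fintype.card n + c * #s := by
  rw [trace_add, trace_one, trace_smul, trace_sum, smul_eq_mul]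
  simp only [trace_vecMulVec]
  gcongr
  exact (sum_le_sum hx).trans (by simp)

/-- If Σ⁻¹ = I + (1/r)·Σ_t x_t x_tᵀ with ‖x_t‖ ≤ 1, then
ln det(Σ⁻¹) ≤ d·ln(1 + T/(rd)). -/
theorem stmt_13 (d T : ℕ) (r : ℝ) (hr : 0 < r)
    (x : ℕ → Fin d → ℝ) (hx : ∀ t, ∑ i, (x t i) ^ 2 ≤ 1)
    (M : Matrix (Fin d) (Fin d) ℝ)
    (hM : M = (1 : Matrix (Fin d) (Fin d) ℝ)
            + (1 / r) • ∑ t ∈ Finset.Icc 1 T, vecMulVec (x t) (x t)) :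
    Real.log M.det ≤ (d : ℝ) * Real.log (1 + (T : ℝ) / (r * d)) := by
  rcases Nat.eq_zero_or_pos d with rfl | hd
  · simp
  have hd' : (0 : ℝ) < d := by exact_mod_cast hd
  have hMpos : M.PosDef := hM ▸ posDef_one_add_smul_sum_vecMulVec_self _ x (by positivity)
  have htrace : M.trace ≤ d + 1 / r * T := by
    have := hM ▸ trace_one_add_smul_sum_vecMulVec_self_le (Icc 1 T) (x := x)
      (fun t _ => by simpa [dotProduct, sq] using hx t) (c := 1 / r) (by positivity)
    simpa using this
  have : Nonempty (Fin d) := ⟨⟨0, hd⟩⟩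
  calc Real.log M.det ≤ d * Real.log (M.trace / d) := by simpa using hMpos.log_det_le
    _ ≤ d * Real.log (1 + T / (r * d)) := by
      gcongr
      · exact div_pos hMpos.trace_pos hd'
      · rw [div_le_iff₀ hd']
        calc M.trace ≤ d + 1 / r * T := htrace
          _ = (1 + T / (r * d)) * d := by field_simp
end

section
/- Let Σ_{t-1} ≻ 0, r > 0, x ∈ ℝ^d, and set Σ̃_t⁻¹ = Σ_{t-1}⁻¹ + (1/r)xxᵀ. Given w_{t-1}, u ∈ ℝ^d and y ∈ ℝ, let w̃_t = w_{t-1} + ((y − xᵀw_{t-1})/(r + xᵀΣ_{t-1}x))·Σ_{t-1}x, and define ℓ = (y − xᵀw_{t-1})², g = (y − xᵀu)², χ = xᵀΣ_{t-1}x. Then (w_{t-1}−u)ᵀΣ_{t-1}⁻¹(w_{t-1}−u) − (w̃_t−u)ᵀΣ̃_t⁻¹(w̃_t−u) = ℓ/r − g/r − ℓχ/(r(r+χ)). -/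
open Matrix

/-!
With `s = (y - xᵀw) / (r + χ)` we have `w̃ - u = (w - u) + s • Σx`. Since `Σ⁻¹ (Σx) = x` and `Σ` is
symmetric, the quadratic form of `Σ⁻¹ + (1/r) x xᵀ` at this vector is a polynomial in `s`, `χ` and
`xᵀ(w - u) = (y - xᵀu) - (y - xᵀw)`; substituting `s` leaves a rational identity in `r` and `χ`,
whose denominators are nonzero because `r > 0` and `χ ≥ 0`.
-/

namespace Matrix

variable {n R : Type*} [Fintype n] [DecidableEq n] [CommRing R]

lemma mulVec_dotProduct_inv_mulVec {A : Matrix n n R} (hA : A.IsSymm) (hdet : IsUnit A.det)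
    (x z : n → R) : (A *ᵥ x) ⬝ᵥ (A⁻¹ *ᵥ z) = x ⬝ᵥ z := by
  rw [dotProduct_mulVec, ← vecMul_transpose, hA.eq, vecMul_vecMul, mul_nonsing_inv _ hdet,
    vecMul_one]

lemma dotProduct_inv_add_smul_vecMulVec_mulVec {A : Matrix n n R} (hA : A.IsSymm)
    (hdet : IsUnit A.det) (c s : R) (x v : n → R) :
    (v + s • (A *ᵥ x)) ⬝ᵥ ((A⁻¹ + c • vecMulVec x x) *ᵥ (v + s • (A *ᵥ x)))
      = v ⬝ᵥ (A⁻¹ *ᵥ v) + 2 * s * (x ⬝ᵥ v) + s ^ 2 * (x ⬝ᵥ (A *ᵥ x))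
        + c * (x ⬝ᵥ v + s * (x ⬝ᵥ (A *ᵥ x))) ^ 2 := by
  have hAx : A⁻¹ *ᵥ (A *ᵥ x) = x := by
    rw [mulVec_mulVec, nonsing_inv_mul _ hdet, one_mulVec]
  simp only [add_mulVec, mulVec_add, mulVec_smul, smul_mulVec, vecMulVec_mulVec,
    op_smul_eq_smul, dotProduct_add, add_dotProduct, dotProduct_smul, smul_dotProduct,
    smul_eq_mul, hAx, mulVec_dotProduct_inv_mulVec hA hdet, dotProduct_comm v x,
    dotProduct_comm (A *ᵥ x) x]
  ring

end Matrix

/-- The per-step progress identity of ARCOR: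
(w−u)ᵀΣ⁻¹(w−u) − (w̃−u)ᵀΣ̃⁻¹(w̃−u) = ℓ/r − g/r − ℓχ/(r(r+χ)). -/
theorem stmt_17 (d : ℕ) (r : ℝ) (hr : 0 < r)
    (Sigma : Matrix (Fin d) (Fin d) ℝ) (hS : Sigma.PosDef)
    (x w u : Fin d → ℝ) (y : ℝ)
    (N : Matrix (Fin d) (Fin d) ℝ)
    (hN : N = Sigma⁻¹ + (1 / r) • vecMulVec x x)
    (wtil : Fin d → ℝ)
    (hwtil : wtil = w + ((y - x ⬝ᵥ w) / (r + x ⬝ᵥ (Sigma *ᵥ x))) • (Sigma *ᵥ x)) :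
    (w - u) ⬝ᵥ (Sigma⁻¹ *ᵥ (w - u)) - (wtil - u) ⬝ᵥ (N *ᵥ (wtil - u))
      = (y - x ⬝ᵥ w) ^ 2 / r - (y - x ⬝ᵥ u) ^ 2 / r
        - (y - x ⬝ᵥ w) ^ 2 * (x ⬝ᵥ (Sigma *ᵥ x))
            / (r * (r + x ⬝ᵥ (Sigma *ᵥ x))) := by
  have hχ : 0 ≤ x ⬝ᵥ (Sigma *ᵥ x) := hS.posSemidef.dotProduct_mulVec_nonneg x
  have hrχ : r + x ⬝ᵥ (Sigma *ᵥ x) ≠ 0 := by positivity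
  have hshift :
      wtil - u = (w - u) + ((y - x ⬝ᵥ w) / (r + x ⬝ᵥ (Sigma *ᵥ x))) • (Sigma *ᵥ x) := by
    rw [hwtil]; abel
  have hxv : x ⬝ᵥ (w - u) = (y - x ⬝ᵥ u) - (y - x ⬝ᵥ w) := by
    rw [dotProduct_sub]; ring
  rw [hN, hshift, dotProduct_inv_add_smul_vecMulVec_mulVec (isHermitian_iff_isSymm.mp hS.1)
    ((isUnit_iff_isUnit_det _).mp hS.isUnit), hxv]
  field_simp
  ring
end
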